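/- Let m < −5/2, let a₁, a₂, a₃ ∈ S^m(ℝ) and a(η) = a₁(η₁)a₂(η₂)a₃(η₃), and let b : ℝ³ → ℂ be measurable and satisfy condition (⋆). Fix 0 < α < β and 0 < δ < min(1, α), and set μ = 1/(−m−1/2). For ξ ∈ ℝ and κ₂, κ₃ ∈ [α,β], let E₂(ξ,κ₂,κ₃) = A_{GGL}(ξ,κ₂,κ₃) ∩ {η ∈ ℝ³ : |η₁| ≤ |ξ|^μ, |η₂| ≤ |ξ|^μ}. Then for every ε > 0 there exist C > 0 and M > 1 such that for all ξ with |ξ| ≥ M and all κ₂, κ₃ ∈ [α,β]: | ∫_{E₂(ξ,κ₂,κ₃)} a(ξθ−η) b(η) dη | ≤ C |ξ|^{3m−1/2+μ+ε}. -/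

import Mathlib

open MeasureTheory

/-- The Japanese bracket `⟨t⟩ = (1+t²)^{1/2}`. -/
noncomputable def jb (t : ℝ) : ℝ := Real.sqrt (1 + t ^ 2)

/-- `⟨η⟩ = (1+|η|²)^{1/2}` for `η ∈ ℝ³`. -/
noncomputable def jb3 (η : Fin 3 → ℝ) : ℝ :=
  Real.sqrt (1 + (η 0) ^ 2 + (η 1) ^ 2 + (η 2) ^ 2)

/-- The symbol class `S^m(ℝ)`. -/
def SymbolClass (m : ℝ) (a : ℝ → ℂ) : Prop :=
  ContDiff ℝ (⊤ : ℕ∞) a ∧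
    ∀ k : ℕ, ∃ C : ℝ, 0 < C ∧ ∀ t : ℝ, ‖iteratedDeriv k a t‖ ≤ C * jb t ^ (m - (k : ℝ))

/-- `a(η) = a₁(η₁)a₂(η₂)a₃(η₃)`. -/
noncomputable def aprod (a₁ a₂ a₃ : ℝ → ℂ) (η : Fin 3 → ℝ) : ℂ :=
  a₁ (η 0) * a₂ (η 1) * a₃ (η 2)

/-- `ξθ = (ξ, κ₂ξ, κ₃ξ)`. -/
def xitheta (ξ κ₂ κ₃ : ℝ) : Fin 3 → ℝ := ![ξ, κ₂ * ξ, κ₃ * ξ]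

/-- Condition (⋆). -/
def StarCond (m : ℝ) (b : (Fin 3 → ℝ) → ℂ) : Prop :=
  ∀ ε : ℝ, 0 < ε →
    ∫⁻ η : Fin 3 → ℝ, ENNReal.ofReal
      (jb (η 0) ^ (-2 * m - 1) * jb (η 1) ^ (-2 * m - 1) * jb (η 2) ^ (-2 * m - 1) *
        jb3 η ^ (2 - 2 * ε) * ‖b η‖ ^ 2) < ⊤

/-- `A_{GGL}(ξ,κ₂,κ₃) = {η : |η₁−ξ| ≥ δ|ξ|, |η₂−κ₂ξ| ≥ δ|ξ|, |η₃−κ₃ξ| ≤ δ|ξ|}`. -/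
def A_GGL (δ ξ κ₂ κ₃ : ℝ) : Set (Fin 3 → ℝ) :=
  {η | δ * |ξ| ≤ |η 0 - ξ| ∧ δ * |ξ| ≤ |η 1 - κ₂ * ξ| ∧ |η 2 - κ₃ * ξ| ≤ δ * |ξ|}

/-- `E₂(ξ,κ₂,κ₃) = A_{GGL}(ξ,κ₂,κ₃) ∩ {η : |η₁| ≤ |ξ|^μ, |η₂| ≤ |ξ|^μ}`. -/
def E₂set (μ δ ξ κ₂ κ₃ : ℝ) : Set (Fin 3 → ℝ) :=
  A_GGL δ ξ κ₂ κ₃ ∩ {η | |η 0| ≤ |ξ| ^ μ ∧ |η 1| ≤ |ξ| ^ μ}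

/-! Cauchy–Schwarz against the weight `w` of condition (⋆) gives
`|∫_E a(ξθ - η) b(η) dη|² ≤ ∫_E |a(ξθ - η)|² / w(η) dη · ∫ w |b|²`, and the second factor is finite.
On `A_GGL ⊇ E₂` the first two factors of `a(ξθ - η)` are `O(|ξ|^m)` and `|η₃| ≥ (α - δ)|ξ|`, so
`|a(ξθ - η)|² / w(η) ≲ |ξ|^(6m - 1 + 2ε) ⟨η₁⟩^(2m+1) ⟨η₂⟩^(2m+1) ⟨κ₃ξ - η₃⟩^(2m)`,
which is integrable because `m < -1`. Hence the integral is `O(|ξ|^(3m - 1/2 + ε))`,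
and `|ξ|^μ ≥ 1`. -/

open scoped ENNReal

noncomputable def starWeight (m ε : ℝ) (η : Fin 3 → ℝ) : ℝ :=
  jb (η 0) ^ (-2 * m - 1) * jb (η 1) ^ (-2 * m - 1) * jb (η 2) ^ (-2 * m - 1) *
    jb3 η ^ (2 - 2 * ε)

lemma jb_pos (t : ℝ) : 0 < jb t := Real.sqrt_pos.2 (by positivity)

lemma abs_le_jb (t : ℝ) : |t| ≤ jb t := by
  rw [← Real.sqrt_sq_eq_abs]
  exact Real.sqrt_le_sqrt (by linarith)

lemma jb3_pos (η : Fin 3 → ℝ) : 0 < jb3 η := Real.sqrt_pos.2 (by positivity)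

lemma jb_two_le_jb3 (η : Fin 3 → ℝ) : jb (η 2) ≤ jb3 η :=
  Real.sqrt_le_sqrt (by nlinarith [sq_nonneg (η 0), sq_nonneg (η 1)])

@[fun_prop]
lemma continuous_jb : Continuous jb := by
  unfold jb; fun_prop

lemma integrable_jb_rpow {s : ℝ} (hs : s < -1) : Integrable (fun t : ℝ => jb t ^ s) := by
  have h := integrable_rpow_neg_one_add_norm_sq (E := ℝ) (μ := volume) (r := -s)
    (by simp; linarith)
  refine h.congr (Filter.Eventually.of_forall fun t => ?_)
  simp only [jb, Real.sqrt_eq_rpow, ← Real.rpow_mul (by positivity : (0 : ℝ) ≤ 1 + t ^ 2),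
    Real.norm_eq_abs, sq_abs]
  ring_nf

lemma starWeight_pos (m ε : ℝ) (η : Fin 3 → ℝ) : 0 < starWeight m ε η := by
  have := jb_pos (η 0); have := jb_pos (η 1); have := jb_pos (η 2); have := jb3_pos η
  unfold starWeight; positivity

lemma measurable_starWeight (m ε : ℝ) : Measurable (starWeight m ε) := by
  unfold starWeight jb3; fun_prop

lemma SymbolClass.exists_norm_le {m : ℝ} {a : ℝ → ℂ} (h : SymbolClass m a) :
    ∃ C, 0 ≤ C ∧ ∀ t, ‖a t‖ ≤ C * jb t ^ m := by
  obtain ⟨C, hC, hbound⟩ := h.2 0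
  exact ⟨C, hC.le, fun t => by simpa using hbound t⟩

lemma continuous_aprod {a₁ a₂ a₃ : ℝ → ℂ} (h₁ : Continuous a₁) (h₂ : Continuous a₂)
    (h₃ : Continuous a₃) : Continuous (aprod a₁ a₂ a₃) := by
  unfold aprod; fun_prop

lemma ENNReal.ofReal_rpow_one_half (x : ℝ) :
    ENNReal.ofReal x ^ (1 / 2 : ℝ) = ENNReal.ofReal (√x) := by
  rcases le_total x 0 with hx | hx
  · simp [ENNReal.ofReal_of_nonpos hx, Real.sqrt_eq_zero'.2 hx]
  · rw [ENNReal.ofReal_rpow_of_nonneg hx (by norm_num), Real.sqrt_eq_rpow]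

theorem norm_setIntegral_mul_le_sqrt_mul_sqrt {X 𝕜 : Type*} [MeasurableSpace X] [RCLike 𝕜]
    {μ : Measure X} {s : Set X} {f g : X → 𝕜} {w : X → ℝ}
    (hf : AEMeasurable f (μ.restrict s)) (hg : AEMeasurable g (μ.restrict s))
    (hw : AEMeasurable w (μ.restrict s)) (hw_pos : ∀ x, 0 < w x) {A B : ℝ}
    (hA : ∫⁻ x in s, ENNReal.ofReal (‖f x‖ ^ 2 / w x) ∂μ ≤ ENNReal.ofReal A)
    (hB : ∫⁻ x in s, ENNReal.ofReal (w x * ‖g x‖ ^ 2) ∂μ ≤ ENNReal.ofReal B) :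
    ‖∫ x in s, f x * g x ∂μ‖ ≤ √A * √B := by
  set u : X → ℝ≥0∞ := fun x => ENNReal.ofReal (‖f x‖ / √(w x))
  set v : X → ℝ≥0∞ := fun x => ENNReal.ofReal (√(w x) * ‖g x‖)
  have hu : ∀ x, u x ^ (2 : ℝ) = ENNReal.ofReal (‖f x‖ ^ 2 / w x) := fun x => by
    rw [ENNReal.ofReal_rpow_of_nonneg (by positivity) (by norm_num), Real.rpow_two, div_pow,
      Real.sq_sqrt (hw_pos x).le]
  have hv : ∀ x, v x ^ (2 : ℝ) = ENNReal.ofReal (w x * ‖g x‖ ^ 2) := fun x => by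
    rw [ENNReal.ofReal_rpow_of_nonneg (by positivity) (by norm_num), Real.rpow_two, mul_pow,
      Real.sq_sqrt (hw_pos x).le]
  have hsplit : ∀ x, ENNReal.ofReal ‖f x * g x‖ = (u * v) x := fun x => by
    have hsqrt : √(w x) ≠ 0 := (Real.sqrt_pos.2 (hw_pos x)).ne'
    rw [Pi.mul_apply, ← ENNReal.ofReal_mul (by positivity), norm_mul]
    congr 1
    field_simp
  have holder : ∫⁻ x in s, ENNReal.ofReal ‖f x * g x‖ ∂μ ≤
      ENNReal.ofReal (√A) * ENNReal.ofReal (√B) := by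
    simp_rw [hsplit, ← ENNReal.ofReal_rpow_one_half]
    calc ∫⁻ x in s, (u * v) x ∂μ
        ≤ (∫⁻ x in s, u x ^ (2 : ℝ) ∂μ) ^ (1 / 2 : ℝ) *
            (∫⁻ x in s, v x ^ (2 : ℝ) ∂μ) ^ (1 / 2 : ℝ) :=
          ENNReal.lintegral_mul_le_Lp_mul_Lq _ Real.HolderConjugate.two_two
            (hf.norm.div hw.sqrt).ennreal_ofReal (hw.sqrt.mul hg.norm).ennreal_ofReal
      _ ≤ ENNReal.ofReal A ^ (1 / 2 : ℝ) * ENNReal.ofReal B ^ (1 / 2 : ℝ) := by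
          simp_rw [hu, hv]
          gcongr
  calc ‖∫ x in s, f x * g x ∂μ‖
      ≤ (∫⁻ x in s, ENNReal.ofReal ‖f x * g x‖ ∂μ).toReal := norm_integral_le_lintegral_norm _
    _ ≤ (ENNReal.ofReal (√A) * ENNReal.ofReal (√B)).toReal :=
        ENNReal.toReal_mono (by finiteness) holder
    _ = √A * √B := by
        rw [← ENNReal.ofReal_mul (Real.sqrt_nonneg _), ENNReal.toReal_ofReal (by positivity)]

lemma sub_mul_abs_le_abs_of_mem_A_GGL {δ ξ κ₂ κ₃ : ℝ} {η : Fin 3 → ℝ} (hκ₃ : 0 ≤ κ₃)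
    (hη : η ∈ A_GGL δ ξ κ₂ κ₃) :
    (κ₃ - δ) * |ξ| ≤ |η 2| := by
  have h := abs_sub_abs_le_abs_sub (κ₃ * ξ) (η 2)
  rw [abs_mul, abs_of_nonneg hκ₃, abs_sub_comm] at h
  linarith [hη.2.2]

lemma norm_aprod_xitheta_sub_le {m δ ξ κ₂ κ₃ C₁ C₂ C₃ : ℝ} {a₁ a₂ a₃ : ℝ → ℂ}
    {η : Fin 3 → ℝ} (hm : m ≤ 0) (hδξ : 0 < δ * |ξ|) (hC₁ : 0 ≤ C₁) (hC₂ : 0 ≤ C₂)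
    (ha₁ : ∀ t, ‖a₁ t‖ ≤ C₁ * jb t ^ m) (ha₂ : ∀ t, ‖a₂ t‖ ≤ C₂ * jb t ^ m)
    (ha₃ : ∀ t, ‖a₃ t‖ ≤ C₃ * jb t ^ m) (hη : η ∈ A_GGL δ ξ κ₂ κ₃) :
    ‖aprod a₁ a₂ a₃ (xitheta ξ κ₂ κ₃ - η)‖ ≤
      C₁ * (δ * |ξ|) ^ m * (C₂ * (δ * |ξ|) ^ m) * (C₃ * jb (κ₃ * ξ - η 2) ^ m) := by
  have far : ∀ t, δ * |ξ| ≤ |t| → jb t ^ m ≤ (δ * |ξ|) ^ m := fun t ht =>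
    Real.rpow_le_rpow_of_nonpos hδξ (ht.trans (abs_le_jb t)) hm
  have h₁ : ‖a₁ (ξ - η 0)‖ ≤ C₁ * (δ * |ξ|) ^ m :=
    (ha₁ _).trans (mul_le_mul_of_nonneg_left (far _ (abs_sub_comm ξ _ ▸ hη.1)) hC₁)
  have h₂ : ‖a₂ (κ₂ * ξ - η 1)‖ ≤ C₂ * (δ * |ξ|) ^ m :=
    (ha₂ _).trans (mul_le_mul_of_nonneg_left (far _ (abs_sub_comm (κ₂ * ξ) _ ▸ hη.2.1)) hC₂)
  simp only [aprod, xitheta, Pi.sub_apply, norm_mul]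
  exact mul_le_mul (mul_le_mul h₁ h₂ (norm_nonneg _) ((norm_nonneg _).trans h₁)) (ha₃ _)
    (norm_nonneg _) (mul_nonneg ((norm_nonneg _).trans h₁) ((norm_nonneg _).trans h₂))

lemma inv_starWeight_le {m ε c : ℝ} (hε : ε ≤ 1) (hmε : m + ε ≤ 1 / 2) (hc : 0 < c)
    {η : Fin 3 → ℝ} (hη : c ≤ |η 2|) :
    (starWeight m ε η)⁻¹ ≤
      jb (η 0) ^ (2 * m + 1) * jb (η 1) ^ (2 * m + 1) * (c ^ (m - 1 / 2 + ε)) ^ 2 := by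
  have hc₂ : c ≤ jb (η 2) := hη.trans (abs_le_jb _)
  have h₂ : jb (η 2) ^ (2 * m + 1) * jb3 η ^ (2 * ε - 2) ≤ (c ^ (m - 1 / 2 + ε)) ^ 2 :=
    calc jb (η 2) ^ (2 * m + 1) * jb3 η ^ (2 * ε - 2)
        ≤ jb (η 2) ^ (2 * m + 1) * jb (η 2) ^ (2 * ε - 2) :=
          mul_le_mul_of_nonneg_left
            (Real.rpow_le_rpow_of_nonpos (jb_pos _) (jb_two_le_jb3 η) (by linarith))
            (Real.rpow_nonneg (jb_pos _).le _)
      _ = jb (η 2) ^ (2 * (m - 1 / 2 + ε)) := by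
          rw [← Real.rpow_add (jb_pos _)]; ring_nf
      _ ≤ c ^ (2 * (m - 1 / 2 + ε)) := Real.rpow_le_rpow_of_nonpos hc hc₂ (by linarith)
      _ = (c ^ (m - 1 / 2 + ε)) ^ 2 := by
          rw [mul_comm, Real.rpow_mul hc.le, Real.rpow_two]
  have hinv : ∀ (x s : ℝ), 0 < x → (x ^ s)⁻¹ = x ^ (-s) := fun x s hx =>
    (Real.rpow_neg hx.le s).symm
  rw [starWeight, mul_inv, mul_inv, mul_inv, hinv _ _ (jb_pos _), hinv _ _ (jb_pos _),
    hinv _ _ (jb_pos _), hinv _ _ (jb3_pos _)]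
  calc _ = jb (η 0) ^ (2 * m + 1) * jb (η 1) ^ (2 * m + 1) *
        (jb (η 2) ^ (2 * m + 1) * jb3 η ^ (2 * ε - 2)) := by ring_nf
    _ ≤ _ := by
        have := jb_pos (η 0); have := jb_pos (η 1)
        gcongr

lemma norm_aprod_sq_div_starWeight_le {m ε δ ξ κ₂ κ₃ c C₁ C₂ C₃ : ℝ} {a₁ a₂ a₃ : ℝ → ℂ}
    {η : Fin 3 → ℝ} (hm : m ≤ 0) (hε : ε ≤ 1) (hmε : m + ε ≤ 1 / 2) (hδξ : 0 < δ * |ξ|)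
    (hc : 0 < c) (hcη : c ≤ |η 2|) (hC₁ : 0 ≤ C₁) (hC₂ : 0 ≤ C₂)
    (ha₁ : ∀ t, ‖a₁ t‖ ≤ C₁ * jb t ^ m) (ha₂ : ∀ t, ‖a₂ t‖ ≤ C₂ * jb t ^ m)
    (ha₃ : ∀ t, ‖a₃ t‖ ≤ C₃ * jb t ^ m) (hη : η ∈ A_GGL δ ξ κ₂ κ₃) :
    ‖aprod a₁ a₂ a₃ (xitheta ξ κ₂ κ₃ - η)‖ ^ 2 / starWeight m ε η ≤
      (C₁ * C₂ * C₃ * (δ * |ξ|) ^ m * (δ * |ξ|) ^ m * c ^ (m - 1 / 2 + ε)) ^ 2 *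
        (jb (η 0) ^ (2 * m + 1) * jb (η 1) ^ (2 * m + 1) * jb (κ₃ * ξ - η 2) ^ (2 * m)) := by
  have hjb : jb (κ₃ * ξ - η 2) ^ (2 * m) = (jb (κ₃ * ξ - η 2) ^ m) ^ 2 := by
    rw [show 2 * m = m * 2 by ring, Real.rpow_mul (jb_pos _).le, Real.rpow_two]
  rw [div_eq_mul_inv, hjb]
  calc _ ≤ (C₁ * (δ * |ξ|) ^ m * (C₂ * (δ * |ξ|) ^ m) * (C₃ * jb (κ₃ * ξ - η 2) ^ m)) ^ 2 *
        (jb (η 0) ^ (2 * m + 1) * jb (η 1) ^ (2 * m + 1) * (c ^ (m - 1 / 2 + ε)) ^ 2) :=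
        mul_le_mul
          (pow_le_pow_left₀ (norm_nonneg _)
            (norm_aprod_xitheta_sub_le hm hδξ hC₁ hC₂ ha₁ ha₂ ha₃ hη) 2)
          (inv_starWeight_le hε hmε hc hcη) (inv_nonneg.2 (starWeight_pos m ε η).le)
          (sq_nonneg _)
    _ = _ := by ring

lemma integrable_fin3_prod {g₀ g₁ g₂ : ℝ → ℝ} (h₀ : Integrable g₀) (h₁ : Integrable g₁)
    (h₂ : Integrable g₂) :
    Integrable (fun η : Fin 3 → ℝ => g₀ (η 0) * g₁ (η 1) * g₂ (η 2)) := by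
  have := Integrable.fintype_prod (f := ![g₀, g₁, g₂]) (μ := fun _ => volume)
    (fun i => by fin_cases i <;> assumption)
  simpa [Fin.prod_univ_three, ← volume_pi] using this

lemma integral_fin3_prod (g₀ g₁ g₂ : ℝ → ℝ) :
    ∫ η : Fin 3 → ℝ, g₀ (η 0) * g₁ (η 1) * g₂ (η 2) =
      (∫ t, g₀ t) * (∫ t, g₁ t) * ∫ t, g₂ t := by
  simpa [Fin.prod_univ_three] using integral_fintype_prod_volume_eq_prod ![g₀, g₁, g₂]

lemma setLIntegral_ofReal_le_mul_integral_prod {s : Set (Fin 3 → ℝ)} {F : (Fin 3 → ℝ) → ℝ}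
    {K : ℝ} {g₀ g₁ g₂ : ℝ → ℝ} (hK : 0 ≤ K) (h₀ : Integrable g₀) (h₁ : Integrable g₁)
    (h₂ : Integrable g₂) (h₀_nonneg : 0 ≤ g₀) (h₁_nonneg : 0 ≤ g₁) (h₂_nonneg : 0 ≤ g₂)
    (hF : ∀ η : Fin 3 → ℝ, η ∈ s → F η ≤ K * (g₀ (η 0) * g₁ (η 1) * g₂ (η 2))) :
    ∫⁻ η in s, ENNReal.ofReal (F η) ≤
      ENNReal.ofReal (K * ((∫ t, g₀ t) * (∫ t, g₁ t) * ∫ t, g₂ t)) := by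
  have hG := (integrable_fin3_prod h₀ h₁ h₂).const_mul K
  have hG_nonneg : ∀ η : Fin 3 → ℝ, 0 ≤ K * (g₀ (η 0) * g₁ (η 1) * g₂ (η 2)) := fun η =>
    mul_nonneg hK (mul_nonneg (mul_nonneg (h₀_nonneg _) (h₁_nonneg _)) (h₂_nonneg _))
  calc ∫⁻ η in s, ENNReal.ofReal (F η)
      ≤ ∫⁻ η in s, ENNReal.ofReal (K * (g₀ (η 0) * g₁ (η 1) * g₂ (η 2))) :=
        setLIntegral_mono_ae hG.aemeasurable.ennreal_ofReal.restrict
          (ae_of_all _ fun η hη => ENNReal.ofReal_le_ofReal (hF η hη))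
    _ ≤ ∫⁻ η : Fin 3 → ℝ, ENNReal.ofReal (K * (g₀ (η 0) * g₁ (η 1) * g₂ (η 2))) :=
        setLIntegral_le_lintegral _ _
    _ = _ := by
        rw [← ofReal_integral_eq_lintegral_ofReal hG (ae_of_all _ hG_nonneg), integral_const_mul,
          integral_fin3_prod]

lemma setLIntegral_A_GGL_norm_aprod_sq_div_starWeight_le {m ε δ α ξ κ₂ κ₃ C₁ C₂ C₃ : ℝ}
    {a₁ a₂ a₃ : ℝ → ℂ} (hm : m < -1) (hε : ε ≤ 1) (hδ : 0 < δ) (hδα : δ < α) (hακ₃ : α ≤ κ₃)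
    (hξ : ξ ≠ 0) (hC₁ : 0 ≤ C₁) (hC₂ : 0 ≤ C₂) (ha₁ : ∀ t, ‖a₁ t‖ ≤ C₁ * jb t ^ m)
    (ha₂ : ∀ t, ‖a₂ t‖ ≤ C₂ * jb t ^ m) (ha₃ : ∀ t, ‖a₃ t‖ ≤ C₃ * jb t ^ m) :
    ∫⁻ η in A_GGL δ ξ κ₂ κ₃,
        ENNReal.ofReal (‖aprod a₁ a₂ a₃ (xitheta ξ κ₂ κ₃ - η)‖ ^ 2 / starWeight m ε η) ≤
      ENNReal.ofReal
        ((C₁ * C₂ * C₃ * δ ^ m * δ ^ m * (α - δ) ^ (m - 1 / 2 + ε) *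
            |ξ| ^ (3 * m - 1 / 2 + ε)) ^ 2 *
          ((∫ t, jb t ^ (2 * m + 1)) * (∫ t, jb t ^ (2 * m + 1)) * ∫ t, jb t ^ (2 * m))) := by
  have hξ0 : 0 < |ξ| := abs_pos.2 hξ
  have hαδ : 0 < α - δ := sub_pos.2 hδα
  have hscale : C₁ * C₂ * C₃ * (δ * |ξ|) ^ m * (δ * |ξ|) ^ m * ((α - δ) * |ξ|) ^ (m - 1 / 2 + ε) =
      C₁ * C₂ * C₃ * δ ^ m * δ ^ m * (α - δ) ^ (m - 1 / 2 + ε) * |ξ| ^ (3 * m - 1 / 2 + ε) := by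
    rw [Real.mul_rpow hδ.le hξ0.le, Real.mul_rpow hαδ.le hξ0.le,
      show 3 * m - 1 / 2 + ε = m + m + (m - 1 / 2 + ε) by ring,
      Real.rpow_add hξ0 (m + m), Real.rpow_add hξ0 m]
    ring
  have hjb_nonneg : ∀ s t : ℝ, 0 ≤ jb t ^ s := fun s t => (Real.rpow_pos_of_pos (jb_pos t) s).le
  rw [← integral_sub_left_eq_self (fun t => jb t ^ (2 * m)) volume (κ₃ * ξ), ← hscale]
  refine setLIntegral_ofReal_le_mul_integral_prod (sq_nonneg _)
    (integrable_jb_rpow (by linarith)) (integrable_jb_rpow (by linarith))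
    ((integrable_jb_rpow (by linarith)).comp_sub_left (κ₃ * ξ))
    (fun t => hjb_nonneg _ t) (fun t => hjb_nonneg _ t) (fun t => hjb_nonneg _ _) fun η hη => ?_
  have hcη : (α - δ) * |ξ| ≤ |η 2| :=
    (mul_le_mul_of_nonneg_right (by linarith) hξ0.le).trans
      (sub_mul_abs_le_abs_of_mem_A_GGL (by linarith) hη)
  exact norm_aprod_sq_div_starWeight_le (by linarith) hε (by linarith) (by positivity)
    (by positivity) hcη hC₁ hC₂ ha₁ ha₂ ha₃ hη

theorem stmt13_general (m : ℝ) (hm : m < -5 / 2) (a₁ a₂ a₃ : ℝ → ℂ)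
    (h₁ : SymbolClass m a₁) (h₂ : SymbolClass m a₂) (h₃ : SymbolClass m a₃)
    (b : (Fin 3 → ℝ) → ℂ) (hb : Measurable b) (hstar : StarCond m b)
    (α β δ : ℝ) (hδ : 0 < δ) (hδ1 : δ < min 1 α)
    (μ : ℝ) (hμ : μ = 1 / (-m - 1 / 2)) :
    ∀ ε : ℝ, 0 < ε →
      ∃ C M : ℝ, 0 < C ∧ 1 < M ∧
        ∀ ξ : ℝ, M ≤ |ξ| → ∀ κ₂ ∈ Set.Icc α β, ∀ κ₃ ∈ Set.Icc α β,
          ‖∫ η in E₂set μ δ ξ κ₂ κ₃, aprod a₁ a₂ a₃ (xitheta ξ κ₂ κ₃ - η) * b η‖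
            ≤ C * |ξ| ^ (3 * m - 1 / 2 + μ + ε) := by
  intro ε hε
  set ε' := min ε 1
  have hε' : 0 < ε' := lt_min hε one_pos
  have hμ0 : 0 ≤ μ := by rw [hμ]; exact div_nonneg zero_le_one (by linarith)
  obtain ⟨C₁, hC₁, ha₁⟩ := h₁.exists_norm_le
  obtain ⟨C₂, hC₂, ha₂⟩ := h₂.exists_norm_le
  obtain ⟨C₃, hC₃, ha₃⟩ := h₃.exists_norm_le
  set K := C₁ * C₂ * C₃ * δ ^ m * δ ^ m * (α - δ) ^ (m - 1 / 2 + ε')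
  set I := (∫ t, jb t ^ (2 * m + 1)) * (∫ t, jb t ^ (2 * m + 1)) * ∫ t, jb t ^ (2 * m)
  set B := (∫⁻ η, ENNReal.ofReal (starWeight m ε' η * ‖b η‖ ^ 2)).toReal
  have hαδ : 0 < α - δ := by linarith [min_le_right 1 α]
  refine ⟨K * √I * √B + 1, 2, by positivity, by norm_num, fun ξ hξ κ₂ _ κ₃ hκ₃ => ?_⟩
  have hA := (lintegral_mono_set (Set.inter_subset_left : E₂set μ δ ξ κ₂ κ₃ ⊆ _)).trans
    (setLIntegral_A_GGL_norm_aprod_sq_div_starWeight_le (by linarith) (min_le_right ε 1) hδ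
      (by linarith) hκ₃.1 (abs_pos.1 (by linarith)) hC₁ hC₂ ha₁ ha₂ ha₃)
  have hB := (setLIntegral_le_lintegral (E₂set μ δ ξ κ₂ κ₃) _).trans
    (ENNReal.ofReal_toReal (hstar ε' hε').ne).ge
  have ha : Continuous (aprod a₁ a₂ a₃) :=
    continuous_aprod h₁.1.continuous h₂.1.continuous h₃.1.continuous
  calc _ ≤ √((K * |ξ| ^ (3 * m - 1 / 2 + ε')) ^ 2 * I) * √B :=
        norm_setIntegral_mul_le_sqrt_mul_sqrt
          (ha.comp (continuous_const.sub continuous_id)).aemeasurable hb.aemeasurable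
          (measurable_starWeight m ε').aemeasurable (starWeight_pos m ε') hA hB
    _ = K * √I * √B * |ξ| ^ (3 * m - 1 / 2 + ε') := by
        rw [Real.sqrt_mul (sq_nonneg _), Real.sqrt_sq (by positivity)]
        ring
    _ ≤ (K * √I * √B + 1) * |ξ| ^ (3 * m - 1 / 2 + μ + ε) := by
        have hε'ε : ε' ≤ ε := min_le_left _ _
        gcongr <;> linarith

theorem stmt13 (m : ℝ) (hm : m < -5 / 2) (a₁ a₂ a₃ : ℝ → ℂ)
    (h₁ : SymbolClass m a₁) (h₂ : SymbolClass m a₂) (h₃ : SymbolClass m a₃)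
    (b : (Fin 3 → ℝ) → ℂ) (hb : Measurable b) (hstar : StarCond m b)
    (α β δ : ℝ) (hα : 0 < α) (hαβ : α < β) (hδ : 0 < δ) (hδ1 : δ < min 1 α)
    (μ : ℝ) (hμ : μ = 1 / (-m - 1 / 2)) :
    ∀ ε : ℝ, 0 < ε →
      ∃ C M : ℝ, 0 < C ∧ 1 < M ∧
        ∀ ξ : ℝ, M ≤ |ξ| → ∀ κ₂ ∈ Set.Icc α β, ∀ κ₃ ∈ Set.Icc α β,
          ‖∫ η in E₂set μ δ ξ κ₂ κ₃, aprod a₁ a₂ a₃ (xitheta ξ κ₂ κ₃ - η) * b η‖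
            ≤ C * |ξ| ^ (3 * m - 1 / 2 + μ + ε) :=
  stmt13_general m hm a₁ a₂ a₃ h₁ h₂ h₃ b hb hstar α β δ hδ hδ1 μ hμ
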